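/- Let G be a finite simple graph and v a vertex with N(v) = {u_1, ..., u_s}, s ≥ 3, such that N(v) is an independent set and no u_i is a pendant vertex. Then γ(G) < θ(G). -/

import Mathlib

/-!
Take a minimum clique partition `P` of `G` and let `C₀` be the clique containing `v`. Since
`N(v)` is independent, `C₀ ⊆ {v, u}` for some neighbour `u` of `v`, and the at least three
neighbours of `v` lie in pairwise distinct cliques. As `u` is not pendant it has a neighbour
`w ≠ v`, and some neighbour `c` of `v` lies neither in `C₀` nor in the clique of `w`. Picking
one vertex from every clique other than `C₀`, taking `w` and `c` in their cliques, gives a set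
of at most `θ(G) - 1` vertices dominating everything outside `C₀`, while `c` dominates `v` and `w`
dominates `u`.
-/

open SimpleGraph

variable {V : Type*}

/-- `D` is a dominating set of `G`: every vertex not in `D` has a neighbor in `D`. -/
def IsDomSet (G : SimpleGraph V) (D : Finset V) : Prop :=
  ∀ v : V, v ∉ D → ∃ u ∈ D, G.Adj u v

/-- The domination number `γ(G)`. -/
noncomputable def domNum [Fintype V] (G : SimpleGraph V) : ℕ :=
  sInf {n | ∃ D : Finset V, IsDomSet G D ∧ D.card = n}

/-- `P` is a partition of the vertex set of `G` into cliques. -/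
def IsCliquePartition (G : SimpleGraph V) (P : Finset (Finset V)) : Prop :=
  (∀ C ∈ P, G.IsClique (C : Set V)) ∧ ∀ v : V, ∃! C : Finset V, C ∈ P ∧ v ∈ C

/-- The clique covering number `θ(G)`. -/
noncomputable def cliqueCoverNum [Fintype V] (G : SimpleGraph V) : ℕ :=
  sInf {n | ∃ P : Finset (Finset V), IsCliquePartition G P ∧ P.card = n}

open Finset

theorem exists_finset_card_le_forall_nonempty_inter (𝒞 : Finset (Finset V)) :
    ∃ S : Finset V, S.card ≤ 𝒞.card ∧ ∀ C ∈ 𝒞, C.Nonempty → ∃ s ∈ S, s ∈ C := by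
  classical
  have hne : ∀ C ∈ 𝒞.filter Finset.Nonempty, ∃ s, s ∈ C := fun C hC => (mem_filter.1 hC).2
  choose f hf using hne
  refine ⟨(𝒞.filter Finset.Nonempty).attach.image fun C => f C.1 C.2,
    card_image_le.trans (card_attach.le.trans (card_filter_le _ _)), fun C hC hCne => ?_⟩
  have hC' : C ∈ 𝒞.filter Finset.Nonempty := mem_filter.2 ⟨hC, hCne⟩
  exact ⟨f C hC', mem_image_of_mem _ (mem_attach _ ⟨C, hC'⟩), hf C hC'⟩

theorem isCliquePartition_singletons [Fintype V] [DecidableEq V] (G : SimpleGraph V) :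
    IsCliquePartition G (univ.image fun x : V => ({x} : Finset V)) := by
  refine ⟨fun C hC => ?_, fun x => ⟨{x}, ⟨mem_image_of_mem _ (mem_univ x), mem_singleton_self x⟩, ?_⟩⟩
  · obtain ⟨x, -, rfl⟩ := mem_image.1 hC
    simpa only [coe_singleton] using G.isClique_singleton x
  · rintro C ⟨hC, hxC⟩
    obtain ⟨y, -, rfl⟩ := mem_image.1 hC
    rw [mem_singleton.1 hxC]

theorem exists_isCliquePartition_card_eq_cliqueCoverNum [Fintype V] (G : SimpleGraph V) :
    ∃ P, IsCliquePartition G P ∧ P.card = cliqueCoverNum G := by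
  classical
  exact Nat.sInf_mem (s := {n | ∃ P, IsCliquePartition G P ∧ P.card = n})
    ⟨_, _, isCliquePartition_singletons G, rfl⟩

theorem domNum_le_card [Fintype V] {G : SimpleGraph V} {D : Finset V} (hD : IsDomSet G D) :
    domNum G ≤ D.card :=
  Nat.sInf_le ⟨D, hD, rfl⟩

namespace IsCliquePartition

variable {G : SimpleGraph V} {P : Finset (Finset V)} (hP : IsCliquePartition G P)
include hP

noncomputable def part (x : V) : Finset V :=
  (hP.2 x).exists.choose

theorem part_mem (x : V) : hP.part x ∈ P :=
  (hP.2 x).exists.choose_spec.1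

theorem mem_part (x : V) : x ∈ hP.part x :=
  (hP.2 x).exists.choose_spec.2

theorem eq_part {C : Finset V} {x : V} (hC : C ∈ P) (hx : x ∈ C) : C = hP.part x :=
  (hP.2 x).unique ⟨hC, hx⟩ ⟨hP.part_mem x, hP.mem_part x⟩

theorem adj_of_mem_part {x y : V} (hy : y ∈ hP.part x) (hyx : y ≠ x) : G.Adj y x :=
  hP.1 _ (hP.part_mem x) hy (hP.mem_part x) hyx

theorem injOn_part_of_isIndepSet {s : Set V} (hs : G.IsIndepSet s) : Set.InjOn hP.part s := by
  intro x hx y hy hxy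
  by_contra hne
  exact hs hx hy hne (hP.adj_of_mem_part (hxy ▸ hP.mem_part x) hne)

theorem exists_superset_card_lt_dominating {C₀ : Finset V} (hC₀ : C₀ ∈ P) {T : Finset V}
    (hT₀ : Disjoint T C₀) (hT : Set.InjOn hP.part T) :
    ∃ D, T ⊆ D ∧ D.card < P.card ∧ ∀ x ∉ C₀, x ∉ D → ∃ d ∈ D, G.Adj d x := by
  classical
  have hpart_ne (x : V) (hx : x ∉ C₀) : hP.part x ∈ P.erase C₀ :=
    mem_erase.2 ⟨fun h => hx (h ▸ hP.mem_part x), hP.part_mem x⟩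
  obtain ⟨S, hScard, hS⟩ :=
    exists_finset_card_le_forall_nonempty_inter ((P.erase C₀).filter (Disjoint T))
  refine ⟨T ∪ S, subset_union_left, ?_, fun x hx hxD => ?_⟩
  · have hTcard : T.card ≤ ((P.erase C₀).filter fun C => ¬ Disjoint T C).card :=
      card_le_card_of_injOn hP.part (fun t ht => mem_filter.2
        ⟨hpart_ne t (disjoint_left.1 hT₀ ht), not_disjoint_iff.2 ⟨t, ht, hP.mem_part t⟩⟩) hT
    have hsplit := card_filter_add_card_filter_not (s := P.erase C₀) (Disjoint T)
    have hP₀ := card_erase_add_one hC₀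
    have := card_union_le T S
    omega
  · have hxT : x ∉ T := fun h => hxD (mem_union_left _ h)
    have hxS : x ∉ S := fun h => hxD (mem_union_right _ h)
    by_cases hdisj : Disjoint T (hP.part x)
    · obtain ⟨s, hs, hsx⟩ :=
        hS _ (mem_filter.2 ⟨hpart_ne x hx, hdisj⟩) ⟨x, hP.mem_part x⟩
      exact ⟨s, mem_union_right _ hs, hP.adj_of_mem_part hsx (ne_of_mem_of_not_mem hs hxS)⟩
    · obtain ⟨t, ht, htx⟩ := not_disjoint_iff.1 hdisj
      exact ⟨t, mem_union_left _ ht, hP.adj_of_mem_part htx (ne_of_mem_of_not_mem ht hxT)⟩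

variable [Fintype V] [DecidableRel G.Adj] {v : V} (hN : G.IsIndepSet (G.neighborSet v))
include hN

theorem exists_adj_part_subset_pair (hv : 0 < G.degree v) :
    ∃ u, G.Adj v u ∧ ∀ x ∈ hP.part v, x = v ∨ x = u := by
  by_cases h : ∃ u ∈ hP.part v, G.Adj v u
  · obtain ⟨u, hu, hvu⟩ := h
    refine ⟨u, hvu, fun x hx => or_iff_not_imp_left.2 fun hxv => ?_⟩
    have hvx : G.Adj v x := (hP.adj_of_mem_part hx hxv).symm
    exact hP.injOn_part_of_isIndepSet hN hvx hvu
      ((hP.eq_part (hP.part_mem v) hx).symm.trans (hP.eq_part (hP.part_mem v) hu))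
  · push Not at h
    obtain ⟨u, hu⟩ := (G.degree_pos_iff_exists_adj v).1 hv
    exact ⟨u, hu, fun x hx => or_iff_not_imp_left.2 fun hxv =>
      absurd (hP.adj_of_mem_part hx hxv).symm (h x hx)⟩

theorem exists_adj_part_ne_part_ne (hv : 3 ≤ G.degree v) (w : V) :
    ∃ c, G.Adj v c ∧ hP.part c ≠ hP.part v ∧ hP.part c ≠ hP.part w := by
  classical
  have hcard : 3 ≤ ((G.neighborFinset v).image hP.part).card := by
    rwa [card_image_of_injOn (by simpa using hP.injOn_part_of_isIndepSet hN),
      card_neighborFinset_eq_degree]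
  obtain ⟨C, hC⟩ : (((G.neighborFinset v).image hP.part).erase (hP.part v)).erase
      (hP.part w) |>.Nonempty := by
    rw [← card_pos]
    have := pred_card_le_card_erase (s := (G.neighborFinset v).image hP.part) (a := hP.part v)
    have := pred_card_le_card_erase
      (s := ((G.neighborFinset v).image hP.part).erase (hP.part v)) (a := hP.part w)
    omega
  simp only [mem_erase, mem_image, mem_neighborFinset] at hC
  obtain ⟨hCw, hCv, c, hvc, rfl⟩ := hC
  exact ⟨c, hvc, hCv, hCw⟩

end IsCliquePartition

theorem SimpleGraph.exists_adj_ne_of_degree_ne_one [Fintype V] {G : SimpleGraph V}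
    [DecidableRel G.Adj] {u v : V} (huv : G.Adj u v) (hu : G.degree u ≠ 1) :
    ∃ w, w ≠ v ∧ G.Adj u w := by
  have hpos : 0 < G.degree u := (G.degree_pos_iff_exists_adj u).2 ⟨v, huv⟩
  obtain ⟨w, hw, hwv⟩ :=
    exists_mem_ne (s := G.neighborFinset u) (by rw [card_neighborFinset_eq_degree]; omega) v
  exact ⟨w, hwv, (G.mem_neighborFinset u w).1 hw⟩

/-- If `v` has at least 3 neighbors, its neighborhood is an independent set, and no
neighbor of `v` is pendant, then `γ(G) < θ(G)`. -/
theorem stmt_10 [Fintype V] (G : SimpleGraph V) [DecidableRel G.Adj]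
    (v : V) (hs : 3 ≤ G.degree v)
    (hindep : ∀ a ∈ G.neighborSet v, ∀ b ∈ G.neighborSet v, a ≠ b → ¬ G.Adj a b)
    (hpend : ∀ u ∈ G.neighborSet v, G.degree u ≠ 1) :
    domNum G < cliqueCoverNum G := by
  classical
  have hN : G.IsIndepSet (G.neighborSet v) := hindep
  obtain ⟨P, hP, hPcard⟩ := exists_isCliquePartition_card_eq_cliqueCoverNum G
  obtain ⟨u, hvu, hpart_v⟩ := hP.exists_adj_part_subset_pair hN (by omega)
  obtain ⟨w, hwv, huw⟩ := exists_adj_ne_of_degree_ne_one hvu.symm (hpend u hvu)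
  obtain ⟨c, hvc, hcv, hcw⟩ := hP.exists_adj_part_ne_part_ne hN hs w
  have hw : w ∉ hP.part v := fun h => (hpart_v w h).elim hwv (huw.ne' ·)
  have hc : c ∉ hP.part v := fun h => hcv (hP.eq_part (hP.part_mem v) h).symm
  obtain ⟨D, hTD, hDcard, hD⟩ := hP.exists_superset_card_lt_dominating (hP.part_mem v)
    (T := {w, c}) (by simp [hw, hc]) (by simpa using fun h => absurd h.symm hcw)
  have hdom : IsDomSet G D := by
    intro x hxD
    by_cases hx : x ∈ hP.part v
    · rcases hpart_v x hx with rfl | rfl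
      · exact ⟨c, hTD (by simp), hvc.symm⟩
      · exact ⟨w, hTD (by simp), huw.symm⟩
    · exact hD x hx hxD
  exact hPcard ▸ (domNum_le_card hdom).trans_lt hDcard
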